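/- arXiv:1208.2718 — 2 statements merged into one kernel-verified Lean document; each statement's English description precedes it below -/
import Mathlib

section
/- Let (X, d) be a metric space, y ∈ X, T > 0, and f : X → ℝ a function satisfying f(x) ≥ −K − d(x,y)²/(8T) for all x ∈ X, for some constant K ≥ 0. Let h > 0 and let x_0, x_1, …, x_j be a sequence with each x_{i+1} minimizing z ↦ d(x_i, z)²/(2h) + f(z), and suppose j h ≤ T. Then d(x_0, x_j)² ≤ 4 j h ( f(x_0) + K + d(x_0,y)²/(4T) ). -/
/-!
Comparing each proximal step with the trivial competitor `z = x i` gives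
`d(x_i, x_{i+1})² ≤ 2h (f(x_i) − f(x_{i+1}))`; summing and applying Cauchy–Schwarz to the
triangle inequality yields `d(x₀, x_j)² ≤ 2jh (f(x₀) − f(x_j))`. Bounding `−f(x_j)` through the
lower bound on `f` and `d(x_j, y)² ≤ 2 d(x_j, x₀)² + 2 d(x₀, y)²`, the term `d(x₀, x_j)²`
reappears on the right with coefficient `jh/(2T) ≤ 1/2`, so it can be absorbed on the left.
-/

open Finset

theorem le_of_le_two_mul_add_self_div {a T u F E : ℝ} (hT : 0 < T) (haT : a ≤ T)
    (hu : 0 ≤ u) (h : u ≤ 2 * a * (F + (u + E) / (4 * T))) : u ≤ 4 * a * (F + E / (4 * T)) := by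
  have habsorb : a * (u / T) ≤ u :=
    calc a * (u / T) ≤ T * (u / T) := by gcongr
      _ = u := mul_div_cancel₀ u hT.ne'
  have hexpand :
      2 * a * (F + (u + E) / (4 * T)) = 2 * a * F + a * (u / T) / 2 + a * (E / T) / 2 := by
    ring
  have hgoal : 4 * a * (F + E / (4 * T)) = 4 * a * F + a * (E / T) := by ring
  linarith

section

variable {X : Type*} [PseudoMetricSpace X]

def IsProximalStep (f : X → ℝ) (h : ℝ) (p q : X) : Prop :=
  ∀ z : X, dist p q ^ 2 / (2 * h) + f q ≤ dist p z ^ 2 / (2 * h) + f z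

theorem IsProximalStep.dist_sq_le {f : X → ℝ} {h : ℝ} {p q : X} (hh : 0 < h)
    (hpq : IsProximalStep f h p q) : dist p q ^ 2 ≤ 2 * h * (f p - f q) := by
  have hp := hpq p
  rw [dist_self, zero_pow two_ne_zero, zero_div, zero_add] at hp
  have hp' : dist p q ^ 2 / (2 * h) ≤ f p - f q := by linarith
  rwa [div_le_iff₀ (by positivity), mul_comm] at hp'

theorem dist_sq_le_mul_sum_dist_sq (x : ℕ → X) (n : ℕ) :
    dist (x 0) (x n) ^ 2 ≤ n * ∑ i ∈ range n, dist (x i) (x (i + 1)) ^ 2 :=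
  calc dist (x 0) (x n) ^ 2 ≤ (∑ i ∈ range n, dist (x i) (x (i + 1))) ^ 2 :=
        pow_le_pow_left₀ dist_nonneg (dist_le_range_sum_dist x n) 2
    _ ≤ n * ∑ i ∈ range n, dist (x i) (x (i + 1)) ^ 2 := by
        simpa using sq_sum_le_card_mul_sum_sq (s := range n)

theorem dist_sq_le_of_isProximalStep {f : X → ℝ} {h : ℝ} (hh : 0 < h) {x : ℕ → X} {j : ℕ}
    (hstep : ∀ i < j, IsProximalStep f h (x i) (x (i + 1))) :
    dist (x 0) (x j) ^ 2 ≤ 2 * (j * h) * (f (x 0) - f (x j)) := by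
  have henergy : ∑ i ∈ range j, dist (x i) (x (i + 1)) ^ 2 ≤ 2 * h * (f (x 0) - f (x j)) :=
    calc ∑ i ∈ range j, dist (x i) (x (i + 1)) ^ 2
        ≤ ∑ i ∈ range j, 2 * h * (f (x i) - f (x (i + 1))) :=
          sum_le_sum fun i hi => (hstep i (mem_range.mp hi)).dist_sq_le hh
      _ = 2 * h * (f (x 0) - f (x j)) := by
          rw [← mul_sum, sum_range_sub' (fun i => f (x i))]
  calc dist (x 0) (x j) ^ 2 ≤ j * ∑ i ∈ range j, dist (x i) (x (i + 1)) ^ 2 :=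
        dist_sq_le_mul_sum_dist_sq x j
    _ ≤ j * (2 * h * (f (x 0) - f (x j))) := by gcongr
    _ = 2 * (j * h) * (f (x 0) - f (x j)) := by ring

theorem dist_sq_le_two_mul_add (a b c : X) :
    dist a c ^ 2 ≤ 2 * (dist a b ^ 2 + dist b c ^ 2) :=
  (pow_le_pow_left₀ dist_nonneg (dist_triangle a b c) 2).trans add_sq_le

end

theorem discrete_flow_distance_control_general
    {X : Type*} [MetricSpace X] (f : X → ℝ) (y : X) (T K : ℝ)
    (hT : 0 < T)
    (hlb : ∀ x : X, f x ≥ -K - dist x y ^ 2 / (8 * T))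
    (h : ℝ) (hh : 0 < h) (x : ℕ → X) (j : ℕ) (hjh : (j : ℝ) * h ≤ T)
    (hmin : ∀ i < j, ∀ z : X,
      dist (x i) (x (i + 1)) ^ 2 / (2 * h) + f (x (i + 1)) ≤
        dist (x i) z ^ 2 / (2 * h) + f z) :
    dist (x 0) (x j) ^ 2 ≤ 4 * j * h * (f (x 0) + K + dist (x 0) y ^ 2 / (4 * T)) := by
  set D := dist (x 0) (x j)
  set a : ℝ := j * h
  have hflow : D ^ 2 ≤ 2 * a * (f (x 0) - f (x j)) := dist_sq_le_of_isProximalStep hh hmin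
  have hfj : -K - (D ^ 2 + dist (x 0) y ^ 2) / (4 * T) ≤ f (x j) := by
    have hy := dist_sq_le_two_mul_add (x j) (x 0) y
    rw [dist_comm (x j) (x 0)] at hy
    calc -K - (D ^ 2 + dist (x 0) y ^ 2) / (4 * T)
        = -K - 2 * (D ^ 2 + dist (x 0) y ^ 2) / (8 * T) := by ring
      _ ≤ -K - dist (x j) y ^ 2 / (8 * T) := by gcongr
      _ ≤ f (x j) := hlb (x j)
  have hsum : D ^ 2 ≤ 2 * a * (f (x 0) + K + (D ^ 2 + dist (x 0) y ^ 2) / (4 * T)) := by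
    linarith [mul_le_mul_of_nonneg_left hfj (by positivity : 0 ≤ 2 * a)]
  simpa only [a, mul_assoc] using le_of_le_two_mul_add_self_div hT hjh (sq_nonneg D) hsum

/-- Mayer's distance-control lemma for discrete gradient flows: under the quadratic
lower bound `f(x) ≥ −K − d(x,y)²/(8T)`, a discrete gradient flow with step `h` and
`j h ≤ T` satisfies `d(x₀,x_j)² ≤ 4 j h (f(x₀) + K + d(x₀,y)²/(4T))`. -/
theorem discrete_flow_distance_control
    {X : Type*} [MetricSpace X] (f : X → ℝ) (y : X) (T K : ℝ)
    (hT : 0 < T) (hK : 0 ≤ K)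
    (hlb : ∀ x : X, f x ≥ -K - dist x y ^ 2 / (8 * T))
    (h : ℝ) (hh : 0 < h) (x : ℕ → X) (j : ℕ) (hjh : (j : ℝ) * h ≤ T)
    (hmin : ∀ i < j, ∀ z : X,
      dist (x i) (x (i + 1)) ^ 2 / (2 * h) + f (x (i + 1)) ≤
        dist (x i) z ^ 2 / (2 * h) + f z) :
    dist (x 0) (x j) ^ 2 ≤ 4 * j * h * (f (x 0) + K + dist (x 0) y ^ 2 / (4 * T)) :=
  discrete_flow_distance_control_general f y T K hT hlb h hh x j hjh hmin
end

section
/- Let (X, d) be a geodesic metric space satisfying the quadrilateral comparison: for x_0,x_1,y_0,y_1 ∈ X with geodesics x_t from x_0 to x_1 and y_t from y_0 to y_1, d(x_t,y_0)² + d(x_{1−t},y_1)² ≤ d(x_0,y_0)² + d(x_1,y_1)² + 2t² d(x_0,x_1)² + t(d(y_0,y_1)² − d(x_0,x_1)²) − t(d(y_0,y_1) − d(x_0,x_1))² for all t ∈ [0,1]. Let f : X → ℝ be geodesically convex, τ > 0, and suppose φ_0 minimizes z ↦ d(ψ_0,z)²/(2τ) + f(z) and φ_1 minimizes z ↦ d(ψ_1,z)²/(2τ)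 + f(z) for points ψ_0, ψ_1 ∈ X. Then d(φ_0, φ_1) ≤ d(ψ_0, ψ_1). -/
open Set

/-!
Compare each resolvent point `φᵢ` with the point of the geodesic `φ₀ ⇝ φ₁` at time `t`
(from `φ₀`) resp. `1 - t` (from `φ₁`). Adding the two minimality inequalities, the values of
`f` cancel by convexity, so `d(ψ₀,φ₀)² + d(ψ₁,φ₁)²` is at most the sum of squared distances
to the two shifted points. The quadrilateral comparison bounds the latter by
`d(ψ₀,φ₀)² + d(ψ₁,φ₁)² + 2tD(tD + δ - D)` with `D = d(φ₀,φ₁)`, `δ = d(ψ₀,ψ₁)`; if `D > δ`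
this excess is negative for small `t > 0`.
-/

lemma apply_geo_add_apply_geo_one_sub_le {X : Type*} (geo : X → X → ℝ → X) {f : X → ℝ}
    (hconv : ∀ x y : X, ∀ t ∈ Icc (0:ℝ) 1, f (geo x y t) ≤ (1 - t) * f x + t * f y)
    (x y : X) {t : ℝ} (ht : t ∈ Icc (0:ℝ) 1) :
    f (geo x y t) + f (geo x y (1 - t)) ≤ f x + f y := by
  have h₀ := hconv x y t ht
  have h₁ := hconv x y (1 - t) ⟨by linarith [ht.2], by linarith [ht.1]⟩
  linarith

section

variable {X : Type*} [MetricSpace X]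

lemma sq_dist_add_le_of_forall_le {f : X → ℝ} {τ : ℝ} (hτ : 0 < τ) {ψ φ : X}
    (hmin : ∀ z, dist ψ φ ^ 2 / (2 * τ) + f φ ≤ dist ψ z ^ 2 / (2 * τ) + f z) (z : X) :
    dist ψ φ ^ 2 + 2 * τ * f φ ≤ dist ψ z ^ 2 + 2 * τ * f z := by
  have h2τ : 0 < 2 * τ := by positivity
  have h := hmin z
  rw [div_add' _ _ _ h2τ.ne', div_add' _ _ _ h2τ.ne', div_le_div_iff_of_pos_right h2τ] at h
  linarith

lemma sq_dist_add_sq_dist_le_of_resolvent (geo : X → X → ℝ → X) {f : X → ℝ}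
    (hconv : ∀ x y : X, ∀ t ∈ Icc (0:ℝ) 1, f (geo x y t) ≤ (1 - t) * f x + t * f y)
    {τ : ℝ} (hτ : 0 < τ) {ψ0 ψ1 φ0 φ1 : X}
    (hmin0 : ∀ z, dist ψ0 φ0 ^ 2 / (2 * τ) + f φ0 ≤ dist ψ0 z ^ 2 / (2 * τ) + f z)
    (hmin1 : ∀ z, dist ψ1 φ1 ^ 2 / (2 * τ) + f φ1 ≤ dist ψ1 z ^ 2 / (2 * τ) + f z)
    {t : ℝ} (ht : t ∈ Icc (0:ℝ) 1) :
    dist ψ0 φ0 ^ 2 + dist ψ1 φ1 ^ 2 ≤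
      dist (geo φ0 φ1 t) ψ0 ^ 2 + dist (geo φ0 φ1 (1 - t)) ψ1 ^ 2 := by
  have h₀ := sq_dist_add_le_of_forall_le hτ hmin0 (geo φ0 φ1 t)
  have h₁ := sq_dist_add_le_of_forall_le hτ hmin1 (geo φ0 φ1 (1 - t))
  have hf := mul_le_mul_of_nonneg_left (apply_geo_add_apply_geo_one_sub_le geo hconv φ0 φ1 ht)
    (by positivity : (0:ℝ) ≤ 2 * τ)
  rw [dist_comm (geo φ0 φ1 t), dist_comm (geo φ0 φ1 (1 - t))]
  linarith

end

lemma le_of_forall_quadrilateral_excess_nonneg {D δ : ℝ} (hδ : 0 ≤ δ)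
    (h : ∀ t ∈ Icc (0:ℝ) 1, 0 ≤ 2 * t ^ 2 * D ^ 2 + t * (δ ^ 2 - D ^ 2) - t * (δ - D) ^ 2) :
    D ≤ δ := by
  by_contra! hlt
  have hD : 0 < D := hδ.trans_lt hlt
  set t := (D - δ) / (2 * D) with ht
  have htD : t * D = (D - δ) / 2 := by rw [ht]; field_simp
  have ht0 : 0 < t := div_pos (by linarith) (by positivity)
  have ht1 : t ≤ 1 := by rw [ht, div_le_one (by positivity)]; linarith
  have hexcess : 2 * t ^ 2 * D ^ 2 + t * (δ ^ 2 - D ^ 2) - t * (δ - D) ^ 2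
      = -(t * D * (D - δ)) := by
    linear_combination (2 * t * D) * htD
  have hQ := h t ⟨ht0.le, ht1⟩
  rw [hexcess] at hQ
  linarith [mul_pos (mul_pos ht0 hD) (sub_pos.2 hlt)]

theorem resolvent_distance_nonincreasing_general
    {X : Type*} [MetricSpace X]
    (geo : X → X → ℝ → X)
    (hquad : ∀ x0 x1 y0 y1 : X, ∀ t ∈ Icc (0:ℝ) 1,
      dist (geo x0 x1 t) y0 ^ 2 + dist (geo x0 x1 (1 - t)) y1 ^ 2 ≤
        dist x0 y0 ^ 2 + dist x1 y1 ^ 2 + 2 * t ^ 2 * dist x0 x1 ^ 2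
          + t * (dist y0 y1 ^ 2 - dist x0 x1 ^ 2)
          - t * (dist y0 y1 - dist x0 x1) ^ 2)
    (f : X → ℝ)
    (hconv : ∀ x y : X, ∀ t ∈ Icc (0:ℝ) 1,
      f (geo x y t) ≤ (1 - t) * f x + t * f y)
    (τ : ℝ) (hτ : 0 < τ) (ψ0 ψ1 φ0 φ1 : X)
    (hmin0 : ∀ z : X, dist ψ0 φ0 ^ 2 / (2 * τ) + f φ0 ≤ dist ψ0 z ^ 2 / (2 * τ) + f z)
    (hmin1 : ∀ z : X, dist ψ1 φ1 ^ 2 / (2 * τ) + f φ1 ≤ dist ψ1 z ^ 2 / (2 * τ) + f z) :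
    dist φ0 φ1 ≤ dist ψ0 ψ1 := by
  refine le_of_forall_quadrilateral_excess_nonneg dist_nonneg fun t ht => ?_
  have hvar := sq_dist_add_sq_dist_le_of_resolvent geo hconv hτ hmin0 hmin1 ht
  have hq := hquad φ0 φ1 ψ0 ψ1 t ht
  rw [dist_comm φ0 ψ0, dist_comm φ1 ψ1] at hq
  linarith

/-- In a geodesic metric space satisfying the quadrilateral comparison inequality,
the resolvent (Moreau–Yosida minimizer) operator of a geodesically convex function
is distance nonincreasing. -/
theorem resolvent_distance_nonincreasing
    {X : Type*} [MetricSpace X]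
    (geo : X → X → ℝ → X)
    (hgeo : ∀ x y : X, ∀ t ∈ Icc (0:ℝ) 1,
      dist x (geo x y t) = t * dist x y ∧ dist (geo x y t) y = (1 - t) * dist x y)
    (hquad : ∀ x0 x1 y0 y1 : X, ∀ t ∈ Icc (0:ℝ) 1,
      dist (geo x0 x1 t) y0 ^ 2 + dist (geo x0 x1 (1 - t)) y1 ^ 2 ≤
        dist x0 y0 ^ 2 + dist x1 y1 ^ 2 + 2 * t ^ 2 * dist x0 x1 ^ 2
          + t * (dist y0 y1 ^ 2 - dist x0 x1 ^ 2)
          - t * (dist y0 y1 - dist x0 x1) ^ 2)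
    (f : X → ℝ)
    (hconv : ∀ x y : X, ∀ t ∈ Icc (0:ℝ) 1,
      f (geo x y t) ≤ (1 - t) * f x + t * f y)
    (τ : ℝ) (hτ : 0 < τ) (ψ0 ψ1 φ0 φ1 : X)
    (hmin0 : ∀ z : X, dist ψ0 φ0 ^ 2 / (2 * τ) + f φ0 ≤ dist ψ0 z ^ 2 / (2 * τ) + f z)
    (hmin1 : ∀ z : X, dist ψ1 φ1 ^ 2 / (2 * τ) + f φ1 ≤ dist ψ1 z ^ 2 / (2 * τ) + f z) :
    dist φ0 φ1 ≤ dist ψ0 ψ1 :=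
  resolvent_distance_nonincreasing_general geo hquad f hconv τ hτ ψ0 ψ1 φ0 φ1 hmin0 hmin1
end
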